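/- arXiv:1906.10091 — 7 statements merged into one kernel-verified Lean document; each statement's English description precedes it below -/
import Mathlib

section
/- Let α₁, α₂ > 0, μ > 1, and 0 ≤ δ₁ < 2√(α₁α₂). Then for every V₀ ≥ 0, the improper integral I = ∫₀^{V₀} dV / (α₁V^(1+1/μ) + α₂V^(1−1/μ) − δ₁V) converges and satisfies I ≤ (μ/(α₁k₁))·(π/2 − arctan(k₂)), where k₁ = √((4α₁α₂ − δ₁²)/(4α₁²)) and k₂ = −δ₁/√(4α₁α₂ − δ₁²). -/
/-!
The substitution `m = V ^ (1 / μ)` turns the integrand into `μ / (α₁ m² - δ₁ m + α₂)`, which has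
the arctan primitive `μ * quadraticInvPrimitive α₁ δ₁ α₂ (V ^ (1 / μ))`. As the integrand is
positive, this primitive also yields integrability near the singularity at `0`; the bound is
`arctan < π / 2`.
-/

open Real MeasureTheory intervalIntegral Set

noncomputable def quadraticInvPrimitive (a b c m : ℝ) : ℝ :=
  2 / √(4 * a * c - b ^ 2) * arctan ((2 * a * m - b) / √(4 * a * c - b ^ 2))

section Quadratic

variable {a b c : ℝ}

lemma mul_quadratic_pos (hD : 0 < 4 * a * c - b ^ 2) (m : ℝ) :
    0 < a * (a * m ^ 2 - b * m + c) := by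
  nlinarith [sq_nonneg (2 * a * m - b)]

lemma quadratic_pos (ha : 0 < a) (hD : 0 < 4 * a * c - b ^ 2) (m : ℝ) :
    0 < a * m ^ 2 - b * m + c :=
  pos_of_mul_pos_right (mul_quadratic_pos hD m) ha.le

lemma quadratic_ne_zero (hD : 0 < 4 * a * c - b ^ 2) (m : ℝ) : a * m ^ 2 - b * m + c ≠ 0 :=
  right_ne_zero_of_mul (mul_quadratic_pos hD m).ne'

lemma continuous_quadraticInvPrimitive : Continuous (quadraticInvPrimitive a b c) := by
  unfold quadraticInvPrimitive
  fun_prop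

lemma hasDerivAt_quadraticInvPrimitive (hD : 0 < 4 * a * c - b ^ 2) (m : ℝ) :
    HasDerivAt (quadraticInvPrimitive a b c) (1 / (a * m ^ 2 - b * m + c)) m := by
  set s := √(4 * a * c - b ^ 2)
  have hs : 0 < s := sqrt_pos.2 hD
  have hs2 : s ^ 2 = 4 * a * c - b ^ 2 := sq_sqrt hD.le
  have hkey : s ^ 2 + (2 * a * m - b) ^ 2 = 4 * a * (a * m ^ 2 - b * m + c) := by
    rw [hs2]; ring
  have h := ((((hasDerivAt_id m).const_mul (2 * a)).sub_const b).div_const s).arctan.const_mul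
    (2 / s)
  refine h.congr_deriv ?_
  rw [id, div_pow, one_add_div (by positivity), hkey]
  have ha : a ≠ 0 := left_ne_zero_of_mul (mul_quadratic_pos hD m).ne'
  field_simp
  ring

lemma quadraticInvPrimitive_sub_le (hD : 0 < 4 * a * c - b ^ 2) (m : ℝ) :
    quadraticInvPrimitive a b c m - quadraticInvPrimitive a b c 0 ≤
      2 / √(4 * a * c - b ^ 2) * (π / 2 - arctan (-b / √(4 * a * c - b ^ 2))) := by
  have h := (arctan_lt_pi_div_two ((2 * a * m - b) / √(4 * a * c - b ^ 2))).le
  unfold quadraticInvPrimitive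
  rw [mul_zero, zero_sub, mul_sub]
  gcongr

end Quadratic

section RpowSubstitution

variable {a b c V : ℝ}

lemma rpow_factor_quadratic (hV : 0 < V) (p : ℝ) :
    a * V ^ (1 + p) + c * V ^ (1 - p) - b * V =
      V ^ (1 - p) * (a * (V ^ p) ^ 2 - b * V ^ p + c) := by
  have h1 : V ^ (1 + p) = V ^ (1 - p) * (V ^ p) ^ 2 := by
    rw [← rpow_natCast, ← rpow_mul hV.le, ← rpow_add hV]; ring_nf
  have h2 : b * V = V ^ (1 - p) * (b * V ^ p) := by
    rw [mul_left_comm, ← rpow_add hV]; simp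
  rw [h1, h2]
  ring

lemma rpow_quadratic_pos (ha : 0 < a) (hD : 0 < 4 * a * c - b ^ 2) (hV : 0 < V) (p : ℝ) :
    0 < a * V ^ (1 + p) + c * V ^ (1 - p) - b * V := by
  rw [rpow_factor_quadratic hV]
  exact mul_pos (rpow_pos_of_pos hV _) (quadratic_pos ha hD _)

lemma hasDerivAt_quadraticInvPrimitive_rpow {μ : ℝ} (hμ : 0 < μ) (hD : 0 < 4 * a * c - b ^ 2)
    (hV : 0 < V) :
    HasDerivAt (fun V => μ * quadraticInvPrimitive a b c (V ^ (1 / μ)))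
      (1 / (a * V ^ (1 + 1 / μ) + c * V ^ (1 - 1 / μ) - b * V)) V := by
  have h := ((hasDerivAt_quadraticInvPrimitive hD (V ^ (1 / μ))).comp V
    (hasDerivAt_rpow_const (p := 1 / μ) (Or.inl hV.ne'))).const_mul μ
  refine h.congr_deriv ?_
  have hinv : V ^ (1 / μ - 1) = (V ^ (1 - 1 / μ))⁻¹ := by
    rw [← rpow_neg hV.le, neg_sub]
  have hq := quadratic_ne_zero hD (V ^ (1 / μ))
  rw [rpow_factor_quadratic hV, hinv]
  field_simp

end RpowSubstitution

lemma mul_sqrt_div_four_mul_sq {a : ℝ} (ha : 0 < a) (D : ℝ) :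
    a * √(D / (4 * a ^ 2)) = √D / 2 := by
  rw [sqrt_div' D (by positivity), show 4 * a ^ 2 = (2 * a) ^ 2 by ring, sqrt_sq (by positivity)]
  field_simp

theorem stmt_6_general (α₁ α₂ μ δ₁ γ₁ γ₂ : ℝ) (h1 : 0 < α₁) (hμ : 1 < μ)
    (hγ₁ : γ₁ = 1 + 1 / μ) (hγ₂ : γ₂ = 1 - 1 / μ)
    (hδ0 : 0 ≤ δ₁) (hδ : δ₁ < 2 * Real.sqrt (α₁ * α₂)) (V₀ : ℝ) (hV₀ : 0 ≤ V₀) :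
    IntervalIntegrable (fun V => 1 / (α₁ * V ^ γ₁ + α₂ * V ^ γ₂ - δ₁ * V))
      volume 0 V₀ ∧
    ∫ V in (0:ℝ)..V₀, 1 / (α₁ * V ^ γ₁ + α₂ * V ^ γ₂ - δ₁ * V) ≤
      μ / (α₁ * Real.sqrt ((4 * α₁ * α₂ - δ₁ ^ 2) / (4 * α₁ ^ 2))) *
        (Real.pi / 2 - Real.arctan (-δ₁ / Real.sqrt (4 * α₁ * α₂ - δ₁ ^ 2))) := by
  subst hγ₁ hγ₂
  have hμ0 : 0 < μ := one_pos.trans hμ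
  have hD : 0 < 4 * α₁ * α₂ - δ₁ ^ 2 := by
    have := (lt_sqrt (by positivity)).1 (show δ₁ / 2 < √(α₁ * α₂) by linarith)
    linarith
  set F : ℝ → ℝ := fun V => μ * quadraticInvPrimitive α₁ δ₁ α₂ (V ^ (1 / μ))
  have hF : ContinuousOn F (Icc 0 V₀) := by
    have : Continuous fun V : ℝ => V ^ (1 / μ) := continuous_rpow_const (by positivity)
    exact (continuous_const.mul (continuous_quadraticInvPrimitive.comp this)).continuousOn
  have hF' : ∀ V ∈ Ioo 0 V₀, HasDerivAt F
      (1 / (α₁ * V ^ (1 + 1 / μ) + α₂ * V ^ (1 - 1 / μ) - δ₁ * V)) V :=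
    fun V hV => hasDerivAt_quadraticInvPrimitive_rpow hμ0 hD hV.1
  have hint : IntervalIntegrable
      (fun V => 1 / (α₁ * V ^ (1 + 1 / μ) + α₂ * V ^ (1 - 1 / μ) - δ₁ * V)) volume 0 V₀ :=
    (intervalIntegrable_iff_integrableOn_Ioc_of_le hV₀).2 <| integrableOn_deriv_of_nonneg hF hF'
      fun V hV => (one_div_pos.2 (rpow_quadratic_pos h1 hD hV.1 _)).le
  refine ⟨hint, ?_⟩
  rw [integral_eq_sub_of_hasDerivAt_of_le hV₀ hF hF' hint, mul_sqrt_div_four_mul_sq h1,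
    div_div_eq_mul_div, mul_div_assoc, mul_assoc μ]
  have hzero : (0 : ℝ) ^ (1 / μ) = 0 := zero_rpow (by positivity)
  simp only [F, hzero, ← mul_sub]
  exact mul_le_mul_of_nonneg_left (quadraticInvPrimitive_sub_le hD _) hμ0.le

theorem stmt_6 (α₁ α₂ μ δ₁ γ₁ γ₂ : ℝ) (h1 : 0 < α₁) (h2 : 0 < α₂) (hμ : 1 < μ)
    (hγ₁ : γ₁ = 1 + 1 / μ) (hγ₂ : γ₂ = 1 - 1 / μ)
    (hδ0 : 0 ≤ δ₁) (hδ : δ₁ < 2 * Real.sqrt (α₁ * α₂)) (V₀ : ℝ) (hV₀ : 0 ≤ V₀) :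
    IntervalIntegrable (fun V => 1 / (α₁ * V ^ γ₁ + α₂ * V ^ γ₂ - δ₁ * V))
      volume 0 V₀ ∧
    ∫ V in (0:ℝ)..V₀, 1 / (α₁ * V ^ γ₁ + α₂ * V ^ γ₂ - δ₁ * V) ≤
      μ / (α₁ * Real.sqrt ((4 * α₁ * α₂ - δ₁ ^ 2) / (4 * α₁ ^ 2))) *
        (Real.pi / 2 - Real.arctan (-δ₁ / Real.sqrt (4 * α₁ * α₂ - δ₁ ^ 2))) :=
  stmt_6_general α₁ α₂ μ δ₁ γ₁ γ₂ h1 hμ hγ₁ hγ₂ hδ0 hδ V₀ hV₀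
end

section
/- For α₁, α₂ > 0 and μ > 1, the integral ∫₀^{V₀} dV/(α₁V^(1+1/μ) + α₂V^(1−1/μ)) is bounded above by μπ/(2√(α₁α₂)) for every V₀ ≥ 0. -/
open Real MeasureTheory intervalIntegral

theorem stmt_7 (α₁ α₂ μ : ℝ) (h1 : 0 < α₁) (h2 : 0 < α₂) (hμ : 1 < μ)
    (V₀ : ℝ) (hV₀ : 0 ≤ V₀) :
    ∫ V in (0:ℝ)..V₀, 1 / (α₁ * V ^ (1 + 1 / μ) + α₂ * V ^ (1 - 1 / μ)) ≤
      μ * Real.pi / (2 * Real.sqrt (α₁ * α₂)) := by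
  have hμ0 : 0 < μ := lt_trans one_pos hμ
  have hμinv : 0 < 1 / μ := by positivity
  set a := Real.sqrt α₁ with ha
  set b := Real.sqrt α₂ with hb
  have ha0 : 0 < a := Real.sqrt_pos.2 h1
  have hb0 : 0 < b := Real.sqrt_pos.2 h2
  have ha2 : a ^ 2 = α₁ := Real.sq_sqrt h1.le
  have hb2 : b ^ 2 = α₂ := Real.sq_sqrt h2.le
  have hab : Real.sqrt (α₁ * α₂) = a * b := Real.sqrt_mul h1.le α₂
  set k := a / b with hk
  set c := μ / (a * b) with hc
  set f := fun V : ℝ => 1 / (α₁ * V ^ (1 + 1 / μ) + α₂ * V ^ (1 - 1 / μ)) with hf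
  set F := fun x : ℝ => c * Real.arctan (k * x ^ (1 / μ)) with hF
  -- integrability
  have hmeas : AEStronglyMeasurable f (volume.restrict (Set.uIoc 0 V₀)) := by
    apply Measurable.aestronglyMeasurable
    fun_prop
  have hint : IntervalIntegrable f volume 0 V₀ := by
    have hg : IntervalIntegrable (fun x : ℝ => (1/α₂) * x ^ (1/μ - 1)) volume 0 V₀ :=
      (intervalIntegral.intervalIntegrable_rpow' (by linarith)).const_mul _
    apply hg.mono_fun hmeas
    rw [Filter.EventuallyLE, ae_restrict_iff' measurableSet_uIoc]
    filter_upwards with x hx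
    rw [Set.uIoc_of_le hV₀] at hx
    have hx0 : 0 < x := hx.1
    have hd1 : 0 < α₁ * x ^ (1 + 1/μ) := by positivity
    have hd2 : 0 < α₂ * x ^ (1 - 1/μ) := by positivity
    have hfx : f x ≤ (1/α₂) * x ^ (1/μ - 1) := by
      have : f x ≤ 1 / (α₂ * x ^ (1 - 1/μ)) := by
        apply one_div_le_one_div_of_le hd2; linarith
      refine this.trans_eq ?_
      rw [one_div, mul_inv, ← Real.rpow_neg hx0.le]
      ring_nf
    have hfx0 : 0 ≤ f x := by positivity
    simp only [Real.norm_eq_abs, abs_of_nonneg hfx0]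
    refine hfx.trans (le_abs_self _)
  -- derivative
  have hderiv : ∀ x ∈ Set.Ioo (0:ℝ) V₀, HasDerivWithinAt F (f x) (Set.Ioi x) x := by
    intro x hx
    have hx0 : 0 < x := hx.1
    have h1d : HasDerivAt (fun y : ℝ => y ^ (1/μ)) ((1/μ) * x ^ (1/μ - 1)) x :=
      Real.hasDerivAt_rpow_const (Or.inl hx0.ne')
    have h2d : HasDerivAt (fun y : ℝ => Real.arctan (k * y ^ (1/μ)))
        ((1 / (1 + (k * x ^ (1/μ))^2)) * (k * ((1/μ) * x ^ (1/μ - 1)))) x := by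
      exact (Real.hasDerivAt_arctan (k * x ^ (1/μ))).comp x ((h1d.const_mul k))
    have h3d : HasDerivAt F (c * ((1 / (1 + (k * x ^ (1/μ))^2)) * (k * ((1/μ) * x ^ (1/μ - 1))))) x :=
      h2d.const_mul c
    have heq : c * ((1 / (1 + (k * x ^ (1/μ))^2)) * (k * ((1/μ) * x ^ (1/μ - 1)))) = f x := by
      have e1 : x ^ (1 + 1/μ) = x * x ^ (1/μ) := by
        rw [Real.rpow_add hx0, Real.rpow_one]
      have e2 : x ^ (1 - 1/μ) = x / x ^ (1/μ) := by
        rw [Real.rpow_sub hx0, Real.rpow_one]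
      have e3 : x ^ (1/μ - 1) = x ^ (1/μ) / x := by
        rw [Real.rpow_sub hx0, Real.rpow_one]
      have ht0 : 0 < x ^ (1/μ) := Real.rpow_pos_of_pos hx0 _
      rw [hf]
      simp only [e1, e2, e3]
      rw [hc, hk, ← ha2, ← hb2]
      set t := x ^ (1/μ)
      field_simp
      ring
    rw [heq] at h3d
    exact h3d.hasDerivWithinAt
  have hcont : ContinuousOn F (Set.Icc 0 V₀) := by
    apply Continuous.continuousOn
    apply continuous_const.mul
    exact Real.continuous_arctan.comp (continuous_const.mul
      (continuous_id.rpow_const (fun x => Or.inr hμinv.le)))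
  have key : ∫ V in (0:ℝ)..V₀, f V = F V₀ - F 0 :=
    intervalIntegral.integral_eq_sub_of_hasDeriv_right_of_le hV₀ hcont hderiv hint
  have hF0 : F 0 = 0 := by
    show c * Real.arctan (k * (0:ℝ) ^ (1/μ)) = 0
    rw [Real.zero_rpow (by positivity : 1/μ ≠ 0), mul_zero, Real.arctan_zero, mul_zero]
  have hc0 : 0 ≤ c := by positivity
  have hbound : F V₀ ≤ c * (Real.pi / 2) := by
    apply mul_le_mul_of_nonneg_left _ hc0
    exact (Real.arctan_lt_pi_div_two _).le
  calc ∫ V in (0:ℝ)..V₀, f V = F V₀ - F 0 := key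
    _ = F V₀ := by rw [hF0, sub_zero]
    _ ≤ c * (Real.pi / 2) := hbound
    _ = μ * Real.pi / (2 * Real.sqrt (α₁ * α₂)) := by
        rw [hab, hc]; field_simp
end

section
/- Let α₁, α₂ > 0, μ > 1, δ₁ > 2√(α₁α₂), let a < b be the roots of α₁z² − δ₁z + α₂ = 0, and let 0 < k < 1. Then for every V₀ ≥ 0 with V₀^(1/μ) ≤ k·a, the integral ∫₀^{V₀} dV/(α₁V^(1+1/μ) + α₂V^(1−1/μ) − δ₁V) is at most (μ/(α₁(b − a)))·(log((b − ka)/(a(1 − k))) − log(b/a)). -/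
open Real MeasureTheory intervalIntegral

/-!
Since `δ₁ = α₁ (a + b)` and `α₂ = α₁ a b`, the denominator factors as
`α₁ V ^ (1 - 1/μ) (a - V ^ (1/μ)) (b - V ^ (1/μ))`, which is positive while `V ^ (1/μ) < a`.
Partial fractions in `m = V ^ (1/μ)` give the antiderivative
`μ / (α₁ (b - a)) · log ((b - m) / (a - m))`, so the integral equals its increment from `m = 0`;
as `(b - m) / (a - m)` increases with `m`, the value at `m = V₀ ^ (1/μ) ≤ k a` is at most the
value at `m = k a`.
-/

section QuadraticRoots

variable {α β δ a b : ℝ}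

lemma quadratic_roots_vieta (hα : 0 < α) (hdisc : 0 ≤ δ ^ 2 - 4 * α * β)
    (ha : a = (δ - √(δ ^ 2 - 4 * α * β)) / (2 * α))
    (hb : b = (δ + √(δ ^ 2 - 4 * α * β)) / (2 * α)) :
    α * (a + b) = δ ∧ α * (a * b) = β := by
  have hs := Real.sq_sqrt hdisc
  set s := √(δ ^ 2 - 4 * α * β)
  subst ha hb
  constructor
  · field_simp; ring
  · field_simp; linear_combination -hs

lemma discrim_pos_of_two_sqrt_lt (hα : 0 < α) (hβ : 0 < β) (hδ : 2 * √(α * β) < δ) :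
    0 < δ ^ 2 - 4 * α * β := by
  have hαβ := Real.sq_sqrt (mul_pos hα hβ).le
  nlinarith [Real.sqrt_nonneg (α * β)]

lemma quadratic_roots_pos_lt (hα : 0 < α) (hβ : 0 < β) (hδ : 2 * √(α * β) < δ)
    (ha : a = (δ - √(δ ^ 2 - 4 * α * β)) / (2 * α))
    (hb : b = (δ + √(δ ^ 2 - 4 * α * β)) / (2 * α)) :
    0 < a ∧ a < b := by
  have hdisc := discrim_pos_of_two_sqrt_lt hα hβ hδ
  have hs0 : 0 < √(δ ^ 2 - 4 * α * β) := Real.sqrt_pos.mpr hdisc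
  have hsδ : √(δ ^ 2 - 4 * α * β) < δ := by
    nlinarith [Real.sqrt_nonneg (α * β), Real.sq_sqrt (mul_pos hα hβ).le,
      Real.sq_sqrt hdisc.le]
  subst ha hb
  constructor
  · exact div_pos (by linarith) (by positivity)
  · gcongr; linarith

end QuadraticRoots

section RpowRoots

variable {α a b c V : ℝ}

lemma rpow_quadratic_eq_mul_roots (hV : 0 < V) :
    α * V ^ (1 + c) + α * (a * b) * V ^ (1 - c) - α * (a + b) * V =
      α * V ^ (1 - c) * ((a - V ^ c) * (b - V ^ c)) := by
  have h₁ : V ^ (1 + c) = V ^ (1 - c) * (V ^ c * V ^ c) := by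
    rw [← Real.rpow_add hV, ← Real.rpow_add hV]; ring_nf
  have h₂ : V = V ^ (1 - c) * V ^ c := by
    rw [← Real.rpow_add hV]; norm_num
  linear_combination α * h₁ - α * (a + b) * h₂

lemma hasDerivAt_log_sub_rpow_sub_log_sub_rpow (hV : V ≠ 0) (ha : V ^ c ≠ a)
    (hb : V ^ c ≠ b) :
    HasDerivAt (fun V ↦ log (b - V ^ c) - log (a - V ^ c))
      (c * V ^ (c - 1) * (b - a) / ((a - V ^ c) * (b - V ^ c))) V := by
  have hpow : HasDerivAt (fun V : ℝ ↦ V ^ c) (c * V ^ (c - 1)) V :=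
    Real.hasDerivAt_rpow_const (Or.inl hV)
  have hb' : b - V ^ c ≠ 0 := sub_ne_zero.mpr hb.symm
  have ha' : a - V ^ c ≠ 0 := sub_ne_zero.mpr ha.symm
  refine (((hpow.const_sub b).log hb').sub ((hpow.const_sub a).log ha')).congr_deriv ?_
  field_simp
  ring

noncomputable def rpowRootsAntideriv (α a b c V : ℝ) : ℝ :=
  (log (b - V ^ c) - log (a - V ^ c)) / (c * α * (b - a))

lemma hasDerivAt_rpowRootsAntideriv (hα : α ≠ 0) (hc : c ≠ 0) (hab : a ≠ b) (hV : 0 < V)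
    (ha : V ^ c ≠ a) (hb : V ^ c ≠ b) :
    HasDerivAt (rpowRootsAntideriv α a b c)
      (1 / (α * V ^ (1 + c) + α * (a * b) * V ^ (1 - c) - α * (a + b) * V)) V := by
  have hinv : V ^ (1 - c) * V ^ (c - 1) = 1 := by
    rw [← Real.rpow_add hV]; norm_num
  have hba : b - a ≠ 0 := sub_ne_zero.mpr hab.symm
  have hb' : b - V ^ c ≠ 0 := sub_ne_zero.mpr hb.symm
  have ha' : a - V ^ c ≠ 0 := sub_ne_zero.mpr ha.symm
  have hVc : V ^ (1 - c) ≠ 0 := (Real.rpow_pos_of_pos hV _).ne'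
  refine ((hasDerivAt_log_sub_rpow_sub_log_sub_rpow hV.ne' ha hb).div_const
    (c * α * (b - a))).congr_deriv ?_
  rw [rpow_quadratic_eq_mul_roots hV]
  field_simp
  linear_combination hinv

lemma integral_one_div_rpow_quadratic {V₀ : ℝ} (hα : 0 < α) (hc : 0 < c) (hab : a < b)
    (hV₀ : 0 ≤ V₀) (hV₀a : V₀ ^ c < a) :
    ∫ V in (0 : ℝ)..V₀, 1 / (α * V ^ (1 + c) + α * (a * b) * V ^ (1 - c) - α * (a + b) * V) =
      rpowRootsAntideriv α a b c V₀ - rpowRootsAntideriv α a b c 0 := by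
  have hlt : ∀ V ∈ Set.Icc 0 V₀, V ^ c < a := fun V hV ↦
    (Real.rpow_le_rpow hV.1 hV.2 hc.le).trans_lt hV₀a
  have hpow : Continuous fun V : ℝ ↦ V ^ c := Real.continuous_rpow_const hc.le
  have hcont : ContinuousOn (rpowRootsAntideriv α a b c) (Set.Icc 0 V₀) := by
    refine ((ContinuousOn.log ?_ fun V hV ↦ ?_).sub
      (ContinuousOn.log ?_ fun V hV ↦ ?_)).div_const _
    · exact (continuous_const.sub hpow).continuousOn
    · exact sub_ne_zero.mpr (hlt V hV |>.trans hab).ne'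
    · exact (continuous_const.sub hpow).continuousOn
    · exact sub_ne_zero.mpr (hlt V hV).ne'
  have hderiv : ∀ V ∈ Set.Ioo 0 V₀, HasDerivAt (rpowRootsAntideriv α a b c)
      (1 / (α * V ^ (1 + c) + α * (a * b) * V ^ (1 - c) - α * (a + b) * V)) V :=
    fun V hV ↦ hasDerivAt_rpowRootsAntideriv hα.ne' hc.ne' hab.ne hV.1
      (hlt V (Set.Ioo_subset_Icc_self hV)).ne (hlt V (Set.Ioo_subset_Icc_self hV) |>.trans hab).ne
  have hnonneg : ∀ V ∈ Set.Ioo 0 V₀,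
      0 ≤ 1 / (α * V ^ (1 + c) + α * (a * b) * V ^ (1 - c) - α * (a + b) * V) := by
    intro V hV
    have ha' : 0 < a - V ^ c := sub_pos.mpr (hlt V (Set.Ioo_subset_Icc_self hV))
    have hb' : 0 < b - V ^ c := by linarith
    rw [rpow_quadratic_eq_mul_roots hV.1]
    have := Real.rpow_pos_of_pos hV.1 (1 - c)
    positivity
  refine integral_eq_sub_of_hasDerivAt_of_le hV₀ hcont hderiv ?_
  exact (intervalIntegrable_iff_integrableOn_Ioc_of_le hV₀).mpr
    (integrableOn_deriv_of_nonneg hcont hderiv hnonneg)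

end RpowRoots

lemma div_sub_le_div_sub {a b m m' : ℝ} (hm : m ≤ m') (hm' : m' < a) (hab : a ≤ b) :
    (b - m) / (a - m) ≤ (b - m') / (a - m') := by
  rw [div_le_div_iff₀ (by linarith) (by linarith)]
  nlinarith

theorem stmt_8_general (α₁ α₂ μ δ₁ γ₁ γ₂ k : ℝ) (h1 : 0 < α₁) (h2 : 0 < α₂) (hμ : 1 < μ)
    (hγ₁ : γ₁ = 1 + 1 / μ) (hγ₂ : γ₂ = 1 - 1 / μ)
    (hδ : 2 * Real.sqrt (α₁ * α₂) < δ₁) (hk1 : k < 1)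
    (a b : ℝ) (ha : a = (δ₁ - Real.sqrt (δ₁ ^ 2 - 4 * α₁ * α₂)) / (2 * α₁))
    (hb : b = (δ₁ + Real.sqrt (δ₁ ^ 2 - 4 * α₁ * α₂)) / (2 * α₁))
    (V₀ : ℝ) (hV₀ : 0 ≤ V₀) (hV₀a : V₀ ^ (1 / μ) ≤ k * a) :
    ∫ V in (0:ℝ)..V₀, 1 / (α₁ * V ^ γ₁ + α₂ * V ^ γ₂ - δ₁ * V) ≤
      μ / (α₁ * (b - a)) *
        (Real.log ((b - k * a) / (a * (1 - k))) - Real.log (b / a)) := by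
  obtain ⟨hsum, hprod⟩ :=
    quadratic_roots_vieta h1 (discrim_pos_of_two_sqrt_lt h1 h2 hδ).le ha hb
  obtain ⟨ha0, hab⟩ := quadratic_roots_pos_lt h1 h2 hδ ha hb
  have hμ0 : 0 < μ := one_pos.trans hμ
  have hka : k * a < a := by nlinarith
  set m := V₀ ^ (1 / μ)
  have hma : m < a := hV₀a.trans_lt hka
  have hlog : log ((b - m) / (a - m)) ≤ log ((b - k * a) / (a * (1 - k))) := by
    rw [show a * (1 - k) = a - k * a by ring]
    exact log_le_log (div_pos (by linarith) (by linarith))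
      (div_sub_le_div_sub hV₀a hka hab.le)
  subst hγ₁ hγ₂
  rw [← hsum, ← hprod, integral_one_div_rpow_quadratic h1 (by positivity) hab hV₀ hma]
  unfold rpowRootsAntideriv
  rw [Real.zero_rpow (by positivity), sub_zero, sub_zero, ← log_div (by linarith) (by linarith),
    ← log_div (by linarith) (by linarith), ← sub_div]
  calc (log ((b - m) / (a - m)) - log (b / a)) / (1 / μ * α₁ * (b - a))
      = μ / (α₁ * (b - a)) * (log ((b - m) / (a - m)) - log (b / a)) := by
        field_simp
    _ ≤ μ / (α₁ * (b - a)) * (log ((b - k * a) / (a * (1 - k))) - log (b / a)) := by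
        have : 0 < b - a := by linarith
        gcongr

theorem stmt_8 (α₁ α₂ μ δ₁ γ₁ γ₂ k : ℝ) (h1 : 0 < α₁) (h2 : 0 < α₂) (hμ : 1 < μ)
    (hγ₁ : γ₁ = 1 + 1 / μ) (hγ₂ : γ₂ = 1 - 1 / μ)
    (hδ : 2 * Real.sqrt (α₁ * α₂) < δ₁) (hk0 : 0 < k) (hk1 : k < 1)
    (a b : ℝ) (ha : a = (δ₁ - Real.sqrt (δ₁ ^ 2 - 4 * α₁ * α₂)) / (2 * α₁))
    (hb : b = (δ₁ + Real.sqrt (δ₁ ^ 2 - 4 * α₁ * α₂)) / (2 * α₁))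
    (V₀ : ℝ) (hV₀ : 0 ≤ V₀) (hV₀a : V₀ ^ (1 / μ) ≤ k * a) :
    ∫ V in (0:ℝ)..V₀, 1 / (α₁ * V ^ γ₁ + α₂ * V ^ γ₂ - δ₁ * V) ≤
      μ / (α₁ * (b - a)) *
        (Real.log ((b - k * a) / (a * (1 - k))) - Real.log (b / a)) :=
  stmt_8_general α₁ α₂ μ δ₁ γ₁ γ₂ k h1 h2 hμ hγ₁ hγ₂ hδ hk1 a b ha hb V₀ hV₀ hV₀a
end

section
/- Let α₁, α₂ > 0, μ > 1, δ₁ = 2√(α₁α₂), and 0 < k < 1. Then for every V₀ ≥ 0 with V₀^(1/μ) ≤ k·√(α₂/α₁), the integral ∫₀^{V₀} dV/(α₁V^(1+1/μ) + α₂V^(1−1/μ) − δ₁V) is at most (μ/√(α₁α₂))·(k/(1 − k)). -/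
open Real MeasureTheory intervalIntegral

/-!
With `a = √(α₂/α₁)` and `p = 1/μ`, the denominator is the perfect square
`α₁ V^(1-p) (V^p - a)²`, so `(μ/α₁) (a - V^p)⁻¹` is an antiderivative of the (nonnegative)
integrand. The integral is therefore `(μ/α₁) ((a - V₀^p)⁻¹ - a⁻¹)`, which is increasing in
`V₀^p`, hence at most its value `(μ/(α₁ a)) k/(1-k)` at `V₀^p = k a`; and `α₁ a = √(α₁α₂)`.
-/

section

variable {α a p : ℝ}

lemma mul_rpow_one_add_add_sub_eq_mul_rpow_mul_sq {V : ℝ} (hV : 0 < V) :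
    α * V ^ (1 + p) + α * a ^ 2 * V ^ (1 - p) - 2 * α * a * V =
      α * V ^ (1 - p) * (V ^ p - a) ^ 2 := by
  have h_add : V ^ (1 + p) = V ^ (1 - p) * (V ^ p) ^ 2 := by
    rw [← rpow_natCast, ← rpow_mul hV.le, ← rpow_add hV]
    ring_nf
  have h_one : V = V ^ (1 - p) * V ^ p := by
    rw [← rpow_add hV]; norm_num
  rw [h_add]
  linear_combination (-2 * α * a) * h_one

lemma hasDerivAt_inv_sub_rpow {V : ℝ} (hp : p ≠ 0) (hα : α ≠ 0) (hV : 0 < V) (hVa : V ^ p ≠ a) :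
    HasDerivAt (fun V => (p * α)⁻¹ * (a - V ^ p)⁻¹)
      (1 / (α * V ^ (1 + p) + α * a ^ 2 * V ^ (1 - p) - 2 * α * a * V)) V := by
  have h_sub : a - V ^ p ≠ 0 := sub_ne_zero.2 hVa.symm
  have h_deriv := (((hasDerivAt_rpow_const (Or.inl hV.ne')).const_sub a).inv h_sub).const_mul
    (p * α)⁻¹
  refine h_deriv.congr_deriv ?_
  rw [mul_rpow_one_add_add_sub_eq_mul_rpow_mul_sq hV, show p - 1 = -(1 - p) by ring,
    rpow_neg hV.le]
  have : V ^ (1 - p) ≠ 0 := (rpow_pos_of_pos hV _).ne'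
  field_simp
  ring

lemma integral_one_div_mul_rpow_one_add_add_sub (hp : 0 < p) (hα : 0 < α) {V₀ : ℝ} (hV₀ : 0 ≤ V₀)
    (hV₀a : V₀ ^ p < a) :
    ∫ V in (0 : ℝ)..V₀, 1 / (α * V ^ (1 + p) + α * a ^ 2 * V ^ (1 - p) - 2 * α * a * V) =
      (p * α)⁻¹ * ((a - V₀ ^ p)⁻¹ - a⁻¹) := by
  have h_lt : ∀ V ∈ Set.Icc 0 V₀, V ^ p < a := fun V hV =>
    (rpow_le_rpow hV.1 hV.2 hp.le).trans_lt hV₀a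
  have h_cont : ContinuousOn (fun V => (p * α)⁻¹ * (a - V ^ p)⁻¹) (Set.Icc 0 V₀) :=
    continuousOn_const.mul <| (continuousOn_const.sub
      (continuous_rpow_const hp.le).continuousOn).inv₀ fun V hV => (sub_pos.2 (h_lt V hV)).ne'
  have h_deriv : ∀ V ∈ Set.Ioo 0 V₀, HasDerivAt (fun V => (p * α)⁻¹ * (a - V ^ p)⁻¹)
      (1 / (α * V ^ (1 + p) + α * a ^ 2 * V ^ (1 - p) - 2 * α * a * V)) V := fun V hV =>
    hasDerivAt_inv_sub_rpow hp.ne' hα.ne' hV.1 (h_lt V (Set.Ioo_subset_Icc_self hV)).ne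
  have h_nonneg : ∀ V ∈ Set.Ioo 0 V₀,
      0 ≤ 1 / (α * V ^ (1 + p) + α * a ^ 2 * V ^ (1 - p) - 2 * α * a * V) := by
    intro V hV
    rw [mul_rpow_one_add_add_sub_eq_mul_rpow_mul_sq hV.1]
    have := rpow_pos_of_pos hV.1 (1 - p)
    positivity
  rw [integral_eq_sub_of_hasDerivAt_of_le hV₀ h_cont h_deriv
    ((intervalIntegrable_iff_integrableOn_Ioc_of_le hV₀).2
      (integrableOn_deriv_of_nonneg h_cont h_deriv h_nonneg)), zero_rpow hp.ne', sub_zero, mul_sub]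

end

lemma inv_sub_sub_inv_le_of_le_mul {a k x : ℝ} (ha : 0 < a) (hk : k < 1) (hx : x ≤ k * a) :
    (a - x)⁻¹ - a⁻¹ ≤ a⁻¹ * (k / (1 - k)) := by
  have h_pos : 0 < a - k * a := by nlinarith
  calc (a - x)⁻¹ - a⁻¹ ≤ (a - k * a)⁻¹ - a⁻¹ := by gcongr
    _ = a⁻¹ * (k / (1 - k)) := by
      have : 1 - k ≠ 0 := by linarith
      field_simp
      ring

theorem stmt_9_general (α₁ α₂ μ δ₁ γ₁ γ₂ k : ℝ) (h1 : 0 < α₁) (h2 : 0 < α₂) (hμ : 1 < μ)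
    (hδ : δ₁ = 2 * Real.sqrt (α₁ * α₂))
    (hγ₁ : γ₁ = 1 + 1 / μ) (hγ₂ : γ₂ = 1 - 1 / μ)
    (hk1 : k < 1)
    (V₀ : ℝ) (hV₀ : 0 ≤ V₀) (hV₀a : V₀ ^ (1 / μ) ≤ k * Real.sqrt (α₂ / α₁)) :
    ∫ V in (0:ℝ)..V₀, 1 / (α₁ * V ^ γ₁ + α₂ * V ^ γ₂ - δ₁ * V) ≤
      μ / Real.sqrt (α₁ * α₂) * (k / (1 - k)) := by
  set a := √(α₂ / α₁)
  have ha : 0 < a := sqrt_pos.2 (div_pos h2 h1)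
  have hα₂ : α₂ = α₁ * a ^ 2 := by
    rw [sq_sqrt (div_pos h2 h1).le]; field_simp
  have h_sqrt : √(α₁ * α₂) = α₁ * a := by
    rw [hα₂, ← mul_assoc, ← sq, sqrt_mul (sq_nonneg _), sqrt_sq h1.le, sqrt_sq ha.le]
  have hδ₁ : δ₁ = 2 * α₁ * a := by rw [hδ, h_sqrt, mul_assoc]
  have h_lt : V₀ ^ (1 / μ) < a := hV₀a.trans_lt (by nlinarith)
  rw [hγ₁, hγ₂, hδ₁, hα₂,
    integral_one_div_mul_rpow_one_add_add_sub (one_div_pos.2 (by linarith)) h1 hV₀ h_lt,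
    ← hα₂, h_sqrt]
  calc (1 / μ * α₁)⁻¹ * ((a - V₀ ^ (1 / μ))⁻¹ - a⁻¹)
      ≤ (1 / μ * α₁)⁻¹ * (a⁻¹ * (k / (1 - k))) := by
        gcongr
        exact inv_sub_sub_inv_le_of_le_mul ha hk1 hV₀a
    _ = μ / (α₁ * a) * (k / (1 - k)) := by field_simp

theorem stmt_9 (α₁ α₂ μ δ₁ γ₁ γ₂ k : ℝ) (h1 : 0 < α₁) (h2 : 0 < α₂) (hμ : 1 < μ)
    (hδ : δ₁ = 2 * Real.sqrt (α₁ * α₂))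
    (hγ₁ : γ₁ = 1 + 1 / μ) (hγ₂ : γ₂ = 1 - 1 / μ)
    (hk0 : 0 < k) (hk1 : k < 1)
    (V₀ : ℝ) (hV₀ : 0 ≤ V₀) (hV₀a : V₀ ^ (1 / μ) ≤ k * Real.sqrt (α₂ / α₁)) :
    ∫ V in (0:ℝ)..V₀, 1 / (α₁ * V ^ γ₁ + α₂ * V ^ γ₂ - δ₁ * V) ≤
      μ / Real.sqrt (α₁ * α₂) * (k / (1 - k)) :=
  stmt_9_general α₁ α₂ μ δ₁ γ₁ γ₂ k h1 h2 hμ hδ hγ₁ hγ₂ hk1 V₀ hV₀ hV₀a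
end

section
/- Let V : [0,∞) → ℝ be differentiable and nonnegative, let α₁, α₂ > 0, μ > 1, γ₁ = 1+1/μ, γ₂ = 1−1/μ, and suppose V̇(t) ≤ −α₁V(t)^γ₁ − α₂V(t)^γ₂ whenever V(t) > 0. Then V(t) = 0 for all t ≥ T* where T* = μπ/(2√(α₁α₂)). -/
open Real

private lemma zero_stays (α₁ α₂ γ₁ γ₂ : ℝ)
    (V : ℝ → ℝ)
    (hdiff : ∀ t ≥ (0:ℝ), DifferentiableAt ℝ V t)
    (hpos : ∀ t ≥ (0:ℝ), 0 ≤ V t)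
    (hineq : ∀ t ≥ (0:ℝ), 0 < V t →
      deriv V t ≤ -α₁ * (V t) ^ γ₁ - α₂ * (V t) ^ γ₂)
    (h1 : 0 < α₁) (h2 : 0 < α₂)
    {t₀ t : ℝ} (h0 : 0 ≤ t₀) (ht : t₀ ≤ t) (hV0 : V t₀ = 0) : V t = 0 := by
  by_contra h
  have hVt : 0 < V t := lt_of_le_of_ne (hpos t (h0.trans ht)) (Ne.symm h)
  have hcont : ContinuousOn V (Set.Icc t₀ t) := fun s hs =>
    ((hdiff s (h0.trans hs.1)).continuousAt).continuousWithinAt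
  set S : Set ℝ := Set.Icc t₀ t ∩ V ⁻¹' {0} with hS
  have hSclosed : IsClosed S :=
    hcont.preimage_isClosed_of_isClosed isClosed_Icc isClosed_singleton
  have hSne : S.Nonempty := ⟨t₀, ⟨le_refl _, ht⟩, hV0⟩
  have hSbdd : BddAbove S := ⟨t, fun x hx => hx.1.2⟩
  have hmem : sSup S ∈ S := hSclosed.csSup_mem hSne hSbdd
  set s := sSup S with hs
  have hs0 : V s = 0 := hmem.2
  have hst : s ≤ t := hmem.1.2
  have hst' : s < t := by
    rcases lt_or_eq_of_le hst with h' | h'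
    · exact h'
    · exact absurd (h' ▸ hs0) h
  have hts : t₀ ≤ s := hmem.1.1
  have hVpos : ∀ u ∈ Set.Ioc s t, 0 < V u := by
    intro u hu
    rcases lt_or_eq_of_le (hpos u (h0.trans (hts.trans hu.1.le))) with h' | h'
    · exact h'
    · exfalso
      have : u ∈ S := ⟨⟨hts.trans hu.1.le, hu.2⟩, h'.symm⟩
      exact absurd (le_csSup hSbdd this) (not_le.mpr hu.1)
  have hanti : AntitoneOn V (Set.Icc s t) := by
    apply antitoneOn_of_deriv_nonpos (convex_Icc s t)
    · exact hcont.mono (Set.Icc_subset_Icc_left hts)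
    · intro u hu
      rw [interior_Icc] at hu
      exact ((hdiff u (h0.trans (hts.trans hu.1.le))).differentiableWithinAt)
    · intro u hu
      rw [interior_Icc] at hu
      have hVu : 0 < V u := hVpos u ⟨hu.1, hu.2.le⟩
      have := hineq u (h0.trans (hts.trans hu.1.le)) hVu
      have hp1 : 0 < V u ^ γ₁ := Real.rpow_pos_of_pos hVu _
      have hp2 : 0 < V u ^ γ₂ := Real.rpow_pos_of_pos hVu _
      nlinarith
  have := hanti ⟨le_refl s, hst⟩ ⟨hst, le_refl t⟩ hst
  rw [hs0] at this
  linarith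

theorem stmt_10 (α₁ α₂ μ γ₁ γ₂ : ℝ) (h1 : 0 < α₁) (h2 : 0 < α₂) (hμ : 1 < μ)
    (hγ₁ : γ₁ = 1 + 1 / μ) (hγ₂ : γ₂ = 1 - 1 / μ)
    (V : ℝ → ℝ)
    (hdiff : ∀ t ≥ (0:ℝ), DifferentiableAt ℝ V t)
    (hpos : ∀ t ≥ (0:ℝ), 0 ≤ V t)
    (hineq : ∀ t ≥ (0:ℝ), 0 < V t →
      deriv V t ≤ -α₁ * (V t) ^ γ₁ - α₂ * (V t) ^ γ₂) :
    ∀ t, μ * Real.pi / (2 * Real.sqrt (α₁ * α₂)) ≤ t → V t = 0 := by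
  intro t ht
  have hμ0 : (0:ℝ) < μ := lt_trans one_pos hμ
  have hsq : 0 < Real.sqrt (α₁ * α₂) := Real.sqrt_pos.mpr (mul_pos h1 h2)
  set T : ℝ := μ * Real.pi / (2 * Real.sqrt (α₁ * α₂)) with hT
  have hT0 : 0 < T := by
    apply div_pos (mul_pos hμ0 Real.pi_pos) (by positivity)
  have ht0 : 0 < t := lt_of_lt_of_le hT0 ht
  by_contra hne
  have hVt : 0 < V t := lt_of_le_of_ne (hpos t ht0.le) (Ne.symm hne)
  -- V is positive on all of [0, t]
  have hall : ∀ s ∈ Set.Icc (0:ℝ) t, 0 < V s := by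
    intro s hs
    rcases lt_or_eq_of_le (hpos s hs.1) with h' | h'
    · exact h'
    · exact absurd (zero_stays α₁ α₂ γ₁ γ₂ V hdiff hpos hineq h1 h2 hs.1 hs.2 h'.symm)
        hne
  set c : ℝ := Real.sqrt (α₁ / α₂) with hc
  set k : ℝ := Real.sqrt (α₁ * α₂) / μ with hk
  have hc0 : 0 < c := Real.sqrt_pos.mpr (div_pos h1 h2)
  have hk0 : 0 < k := div_pos hsq hμ0
  have hcsq : c ^ 2 = α₁ / α₂ := Real.sq_sqrt (div_pos h1 h2).le
  have hμne : μ ≠ 0 := hμ0.ne'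
  have hα₂ne : α₂ ≠ 0 := h2.ne'
  have hcα : c * α₂ = Real.sqrt (α₁ * α₂) := by
    have hx : c * α₂ = Real.sqrt ((α₁ / α₂) * α₂ ^ 2) := by
      rw [hc, Real.sqrt_mul (div_pos h1 h2).le, Real.sqrt_sq h2.le]
    rw [hx]
    congr 1
    field_simp
  have hkT : k * T = Real.pi / 2 := by
    rw [hk, hT]
    field_simp
  set F : ℝ → ℝ := fun s => Real.arctan (c * V s ^ (1/μ)) + k * s with hF
  -- derivative of F
  have hFd : ∀ u ∈ Set.Icc (0:ℝ) t,
      HasDerivAt F (1 / (1 + (c * V u ^ (1/μ))^2) *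
        (c * (deriv V u * (1/μ) * V u ^ (1/μ - 1))) + k) u := by
    intro u hu
    have hVu : 0 < V u := hall u hu
    have hV : HasDerivAt V (deriv V u) u := (hdiff u hu.1).hasDerivAt
    have hp : HasDerivAt (fun s => V s ^ (1/μ))
        (deriv V u * (1/μ) * V u ^ (1/μ - 1)) u :=
      hV.rpow_const (Or.inl hVu.ne')
    have hcp : HasDerivAt (fun s => c * V s ^ (1/μ))
        (c * (deriv V u * (1/μ) * V u ^ (1/μ - 1))) u := hp.const_mul c
    have harc := hcp.arctan
    have hlin : HasDerivAt (fun s : ℝ => k * s) k u := by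
      simpa using (hasDerivAt_id u).const_mul k
    exact harc.add hlin
  -- F is antitone on [0, t]
  have hanti : AntitoneOn F (Set.Icc 0 t) := by
    apply antitoneOn_of_deriv_nonpos (convex_Icc 0 t)
    · exact fun s hs => ((hFd s hs).continuousAt).continuousWithinAt
    · intro u hu
      rw [interior_Icc] at hu
      exact ((hFd u ⟨hu.1.le, hu.2.le⟩).differentiableAt).differentiableWithinAt
    · intro u hu
      rw [interior_Icc] at hu
      have hu' : u ∈ Set.Icc (0:ℝ) t := ⟨hu.1.le, hu.2.le⟩
      rw [(hFd u hu').deriv]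
      have hVu : 0 < V u := hall u hu'
      set A : ℝ := V u with hA
      have hd : deriv V u ≤ -α₁ * A ^ γ₁ - α₂ * A ^ γ₂ := hineq u hu'.1 hVu
      have hApos : (0:ℝ) < A := hVu
      -- key exponent computations
      have e1 : A ^ (1/μ - 1) * A ^ γ₁ = A ^ (2/μ) := by
        rw [← Real.rpow_add hApos, hγ₁]; ring_nf
      have e2 : A ^ (1/μ - 1) * A ^ γ₂ = 1 := by
        rw [← Real.rpow_add hApos, hγ₂]
        norm_num
      have e3 : (A ^ (1/μ))^2 = A ^ (2/μ) := by
        rw [sq, ← Real.rpow_add hApos]; ring_nf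
      set D : ℝ := 1 + (c * A ^ (1/μ))^2 with hD
      have hD0 : 0 < D := by positivity
      have hDval : D = 1 + (α₁ / α₂) * A ^ (2/μ) := by
        rw [hD, mul_pow, hcsq, e3]
      have hApm : 0 < A ^ (1/μ - 1) := Real.rpow_pos_of_pos hApos _
      have hD0 : (0:ℝ) < 1 + (c * A ^ (1/μ))^2 := by positivity
      have hDval : 1 + (c * A ^ (1/μ))^2 = 1 + (α₁ / α₂) * A ^ (2/μ) := by
        rw [mul_pow, hcsq, e3]
      have h5 : deriv V u * (1/μ) * A ^ (1/μ - 1) ≤ (1/μ) * (-(α₁ * A ^ (2/μ)) - α₂) := by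
        have step : deriv V u * (1/μ) * A ^ (1/μ - 1) ≤
            (-α₁ * A ^ γ₁ - α₂ * A ^ γ₂) * (1/μ) * A ^ (1/μ - 1) := by
          have := mul_le_mul_of_nonneg_right
            (mul_le_mul_of_nonneg_right hd (by positivity : (0:ℝ) ≤ 1/μ)) hApm.le
          linarith
        have h6 : (-α₁ * A ^ γ₁ - α₂ * A ^ γ₂) * (1/μ) * A ^ (1/μ - 1)
            = (1/μ) * (-(α₁ * A ^ (2/μ)) - α₂) := by
          linear_combination (-α₁/μ) * e1 + (-α₂/μ) * e2
        linarith
      have hk' : k = c * α₂ / μ := by rw [hk, ← hcα]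
      have h7 : c * ((1/μ) * (-(α₁ * A ^ (2/μ)) - α₂))
          = -k * (1 + (c * A ^ (1/μ))^2) := by
        rw [hk', hDval]
        field_simp
        ring
      have hnum : c * (deriv V u * (1/μ) * A ^ (1/μ - 1))
          ≤ -k * (1 + (c * A ^ (1/μ))^2) :=
        le_of_le_of_eq (mul_le_mul_of_nonneg_left h5 hc0.le) h7
      have hfin : 1 / (1 + (c * A ^ (1/μ))^2) *
          (c * (deriv V u * (1/μ) * A ^ (1/μ - 1))) ≤ -k := by
        rw [one_div, ← div_eq_inv_mul, div_le_iff₀ hD0]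
        linarith [hnum]
      linarith
  -- conclude
  have hmono := hanti ⟨le_refl 0, ht0.le⟩ ⟨ht0.le, le_refl t⟩ ht0.le
  have hF0 : F 0 < Real.pi / 2 := by
    rw [hF]
    simp only [mul_zero, add_zero]
    exact Real.arctan_lt_pi_div_two _
  have harcpos : 0 < Real.arctan (c * V t ^ (1/μ)) := by
    have : (0:ℝ) < c * V t ^ (1/μ) := by positivity
    calc (0:ℝ) = Real.arctan 0 := Real.arctan_zero.symm
      _ < _ := Real.arctan_strictMono this
  have hkt : Real.pi / 2 ≤ k * t := by
    rw [← hkT]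
    exact mul_le_mul_of_nonneg_left ht hk0.le
  have hFt : Real.pi / 2 < F t := by
    rw [hF]
    dsimp only
    linarith
  exact absurd (lt_trans (lt_of_lt_of_le hFt hmono) hF0) (lt_irrefl _)
end

section
/- Let V : [0,∞) → ℝ be differentiable and nonnegative, and suppose there exist a, b > 0, 0 < p < 1 < q such that V̇(t) ≤ −a·V(t)^p − b·V(t)^q whenever V(t) > 0. Then V(t) = 0 for all t ≥ T where T = 1/(a(1−p)) + 1/(b(q−1)). -/
open Real

theorem stmt_11 (a b p q : ℝ) (ha : 0 < a) (hb : 0 < b)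
    (hp0 : 0 < p) (hp1 : p < 1) (hq : 1 < q)
    (V : ℝ → ℝ)
    (hdiff : ∀ t ≥ (0:ℝ), DifferentiableAt ℝ V t)
    (hpos : ∀ t ≥ (0:ℝ), 0 ≤ V t)
    (hineq : ∀ t ≥ (0:ℝ), 0 < V t →
      deriv V t ≤ -a * (V t) ^ p - b * (V t) ^ q) :
    ∀ t, 1 / (a * (1 - p)) + 1 / (b * (q - 1)) ≤ t → V t = 0 := by
  intro t ht
  have hq1 : (0:ℝ) < q - 1 := by linarith
  have hp1' : (0:ℝ) < 1 - p := by linarith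
  have hbq : 0 < b * (q - 1) := by positivity
  have hap : 0 < a * (1 - p) := by positivity
  set T1 : ℝ := 1 / (b * (q - 1)) with hT1def
  set T2 : ℝ := 1 / (a * (1 - p)) with hT2def
  have hT1 : 0 < T1 := by positivity
  have hT2 : 0 < T2 := by positivity
  set T : ℝ := T2 + T1 with hTdef
  have hTt : T ≤ t := ht
  have hT0 : 0 < T := by positivity
  -- V is antitone on [0, ∞)
  have hA : AntitoneOn V (Set.Ici 0) := by
    apply antitoneOn_of_deriv_nonpos (convex_Ici 0)
    · exact fun s hs => (hdiff s hs).continuousAt.continuousWithinAt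
    · rw [interior_Ici]
      exact fun s hs => (hdiff s (le_of_lt hs)).differentiableWithinAt
    · rw [interior_Ici]
      intro s hs
      rcases (hpos s (le_of_lt hs)).lt_or_eq with h | h
      · have h0 := hineq s (le_of_lt hs) h
        have h1 : 0 ≤ a * V s ^ p := by positivity
        have h2 : 0 ≤ b * V s ^ q := by positivity
        linarith
      · have hmin : IsLocalMin V s := by
          have hev : ∀ᶠ u in nhds s, V s ≤ V u := by
            filter_upwards [eventually_gt_nhds hs] with u hu
            rw [← h]
            exact hpos u hu.le
          exact hev
        rw [hmin.deriv_eq_zero]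
  -- It suffices to show V T = 0
  suffices hVT : V T = 0 by
    have h1 : V t ≤ V T := hA (le_of_lt hT0) (le_trans hT0.le hTt) hTt
    have h2 : 0 ≤ V t := hpos t (le_trans hT0.le hTt)
    linarith
  by_contra hVT
  have hVTpos : 0 < V T := lt_of_le_of_ne (hpos T hT0.le) (Ne.symm hVT)
  have hposOn : ∀ s ∈ Set.Icc (0:ℝ) T, 0 < V s := by
    intro s hs
    exact lt_of_lt_of_le hVTpos (hA hs.1 hT0.le hs.2)
  have hT1T : T1 ≤ T := by linarith
  -- Phase 1: V T1 ≤ 1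
  have hV1 : V T1 ≤ 1 := by
    by_contra h
    push_neg at h
    have hmono : MonotoneOn (fun s => V s ^ (1 - q) - (b * (q - 1)) * s)
        (Set.Icc 0 T1) := by
      have hder : ∀ s ∈ Set.Icc (0:ℝ) T1, HasDerivAt
          (fun s => V s ^ (1 - q) - (b * (q - 1)) * s)
          (deriv V s * (1 - q) * V s ^ (1 - q - 1) - (b * (q - 1)) * 1) s := by
        intro s hs
        have hVs : 0 < V s := hposOn s ⟨hs.1, le_trans hs.2 hT1T⟩
        exact (((hdiff s hs.1).hasDerivAt).rpow_const (Or.inl hVs.ne')).sub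
          ((hasDerivAt_id s).const_mul (b * (q - 1)))
      apply monotoneOn_of_deriv_nonneg (convex_Icc 0 T1)
      · exact fun s hs => (hder s hs).differentiableAt.continuousAt.continuousWithinAt
      · rw [interior_Icc]
        exact fun s hs => (hder s ⟨hs.1.le, hs.2.le⟩).differentiableAt.differentiableWithinAt
      · rw [interior_Icc]
        intro s hs
        have hs' : s ∈ Set.Icc (0:ℝ) T1 := ⟨hs.1.le, hs.2.le⟩
        rw [(hder s hs').deriv]
        have hVs : 0 < V s := hposOn s ⟨hs'.1, le_trans hs'.2 hT1T⟩
        have hd := hineq s hs'.1 hVs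
        have hx : 0 < V s ^ p := rpow_pos_of_pos hVs p
        have hy : 0 < V s ^ q := rpow_pos_of_pos hVs q
        have hz : 0 < V s ^ (1 - q - 1) := rpow_pos_of_pos hVs _
        have hzy : V s ^ (1 - q - 1) * V s ^ q = 1 := by
          rw [← Real.rpow_add hVs]
          norm_num
        have key : (q - 1) * V s ^ (1 - q - 1) * (a * V s ^ p + b * V s ^ q)
            ≤ (q - 1) * V s ^ (1 - q - 1) * (-deriv V s) := by
          apply mul_le_mul_of_nonneg_left (by linarith) (by positivity)
        nlinarith [mul_pos (mul_pos hq1 ha) (mul_pos hx hz)]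
    have h01 : (fun s => V s ^ (1 - q) - (b * (q - 1)) * s) 0 ≤
        (fun s => V s ^ (1 - q) - (b * (q - 1)) * s) T1 :=
      hmono (Set.left_mem_Icc.2 hT1.le) (Set.right_mem_Icc.2 hT1.le) hT1.le
    simp only at h01
    have hbT1 : (b * (q - 1)) * T1 = 1 := by
      rw [hT1def]
      field_simp
    have h0pos : 0 < V 0 ^ (1 - q) :=
      rpow_pos_of_pos (hposOn 0 ⟨le_refl 0, hT0.le⟩) _
    have hlt1 : V T1 ^ (1 - q) < 1 :=
      rpow_lt_one_of_one_lt_of_neg h (by linarith)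
    rw [hbT1] at h01
    simp at h01
    linarith
  -- Phase 2: contradiction
  have hanti : AntitoneOn (fun s => V s ^ (1 - p) + (a * (1 - p)) * s)
      (Set.Icc T1 T) := by
    have hder : ∀ s ∈ Set.Icc T1 T, HasDerivAt
        (fun s => V s ^ (1 - p) + (a * (1 - p)) * s)
        (deriv V s * (1 - p) * V s ^ (1 - p - 1) + (a * (1 - p)) * 1) s := by
      intro s hs
      have hs0 : (0:ℝ) ≤ s := le_trans hT1.le hs.1
      have hVs : 0 < V s := hposOn s ⟨hs0, hs.2⟩
      exact (((hdiff s hs0).hasDerivAt).rpow_const (Or.inl hVs.ne')).add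
        ((hasDerivAt_id s).const_mul (a * (1 - p)))
    apply antitoneOn_of_deriv_nonpos (convex_Icc T1 T)
    · exact fun s hs => (hder s hs).differentiableAt.continuousAt.continuousWithinAt
    · rw [interior_Icc]
      exact fun s hs => (hder s ⟨hs.1.le, hs.2.le⟩).differentiableAt.differentiableWithinAt
    · rw [interior_Icc]
      intro s hs
      have hs' : s ∈ Set.Icc T1 T := ⟨hs.1.le, hs.2.le⟩
      rw [(hder s hs').deriv]
      have hs0 : (0:ℝ) ≤ s := le_trans hT1.le hs'.1
      have hVs : 0 < V s := hposOn s ⟨hs0, hs'.2⟩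
      have hd := hineq s hs0 hVs
      have hx : 0 < V s ^ p := rpow_pos_of_pos hVs p
      have hy : 0 < V s ^ q := rpow_pos_of_pos hVs q
      have hw : 0 < V s ^ (1 - p - 1) := rpow_pos_of_pos hVs _
      have hwx : V s ^ (1 - p - 1) * V s ^ p = 1 := by
        rw [← Real.rpow_add hVs]
        norm_num
      have key : (1 - p) * V s ^ (1 - p - 1) * deriv V s
          ≤ (1 - p) * V s ^ (1 - p - 1) * (-(a * V s ^ p) - b * V s ^ q) := by
        apply mul_le_mul_of_nonneg_left (by linarith) (by positivity)
      nlinarith [mul_pos (mul_pos hp1' hb) (mul_pos hw hy)]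
  have h12 : (fun s => V s ^ (1 - p) + (a * (1 - p)) * s) T1 ≥
      (fun s => V s ^ (1 - p) + (a * (1 - p)) * s) T :=
    hanti (Set.left_mem_Icc.2 hT1T) (Set.right_mem_Icc.2 hT1T) hT1T
  simp only at h12
  have haT : (a * (1 - p)) * T - (a * (1 - p)) * T1 = 1 := by
    rw [hTdef, hT2def]
    field_simp
    ring
  have hVT1p : V T1 ^ (1 - p) ≤ 1 :=
    rpow_le_one (hpos T1 hT1.le) hV1 hp1'.le
  have hVTp : 0 < V T ^ (1 - p) := rpow_pos_of_pos hVTpos _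
  linarith
end

section
/- Let α₁, α₂ > 0, μ > 1, δ₁ ≥ 2√(α₁α₂), γ₁ = 1+1/μ, γ₂ = 1−1/μ, and 0 < k < 1. Let V : [0,∞) → ℝ be differentiable, nonnegative, with V(0)^(1/μ) ≤ k·(δ₁ − √(δ₁²−4α₁α₂))/(2α₁), and suppose V̇(t) ≤ −α₁V(t)^γ₁ − α₂V(t)^γ₂ + δ₁V(t) whenever V(t) > 0. Then V is nonincreasing; in particular V(t)^(1/μ) ≤ k·(δ₁ − √(δ₁²−4α₁α₂))/(2α₁) for all t ≥ 0 (forward invariance of the sublevel set). -/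
open Real Filter Topology

theorem stmt_12 (α₁ α₂ μ δ₁ γ₁ γ₂ k : ℝ) (h1 : 0 < α₁) (h2 : 0 < α₂) (hμ : 1 < μ)
    (hδ : 2 * Real.sqrt (α₁ * α₂) ≤ δ₁)
    (hγ₁ : γ₁ = 1 + 1 / μ) (hγ₂ : γ₂ = 1 - 1 / μ)
    (hk0 : 0 < k) (hk1 : k < 1)
    (V : ℝ → ℝ)
    (hdiff : ∀ t ≥ (0:ℝ), DifferentiableAt ℝ V t)
    (hpos : ∀ t ≥ (0:ℝ), 0 ≤ V t)
    (hV0 : (V 0) ^ (1 / μ) ≤ k * ((δ₁ - Real.sqrt (δ₁ ^ 2 - 4 * α₁ * α₂)) / (2 * α₁)))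
    (hineq : ∀ t ≥ (0:ℝ), 0 < V t →
      deriv V t ≤ -α₁ * (V t) ^ γ₁ - α₂ * (V t) ^ γ₂ + δ₁ * V t) :
    (∀ s t : ℝ, 0 ≤ s → s ≤ t → V t ≤ V s) ∧
    (∀ t ≥ (0:ℝ), (V t) ^ (1 / μ) ≤
      k * ((δ₁ - Real.sqrt (δ₁ ^ 2 - 4 * α₁ * α₂)) / (2 * α₁))) := by
  have hμ0 : (0:ℝ) < μ := by linarith
  have hμne : μ ≠ 0 := ne_of_gt hμ0
  have hinvμ : 0 < 1 / μ := by positivity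
  have hα12 : 0 < α₁ * α₂ := mul_pos h1 h2
  have hsq : 0 < Real.sqrt (α₁ * α₂) := Real.sqrt_pos.2 hα12
  have hδ0 : 0 < δ₁ := lt_of_lt_of_le (by linarith) hδ
  have hD : 0 ≤ δ₁ ^ 2 - 4 * α₁ * α₂ := by
    nlinarith [Real.sq_sqrt hα12.le, Real.sqrt_nonneg (α₁ * α₂)]
  set s₀ := Real.sqrt (δ₁ ^ 2 - 4 * α₁ * α₂) with hs₀def
  have hs₀0 : 0 ≤ s₀ := Real.sqrt_nonneg _
  have hs₀2 : s₀ ^ 2 = δ₁ ^ 2 - 4 * α₁ * α₂ := Real.sq_sqrt hD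
  have hs₀lt : s₀ < δ₁ := by nlinarith
  set V₁ := (δ₁ - s₀) / (2 * α₁) with hV₁def
  have hV₁pos : 0 < V₁ := div_pos (by linarith) (by linarith)
  -- quadratic lemma
  have hquad : ∀ w : ℝ, 0 < w → w < V₁ → 0 < α₁ * w ^ 2 - δ₁ * w + α₂ := by
    intro w hw hwlt
    have h2w : w * (2 * α₁) < δ₁ - s₀ := (lt_div_iff₀ (by linarith)).1 hwlt
    have hA : 0 < δ₁ - s₀ - 2 * α₁ * w := by linarith
    have hB : 0 < δ₁ + s₀ - 2 * α₁ * w := by linarith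
    nlinarith [mul_pos hA hB]
  -- right-hand side lemma
  have hrhs : ∀ v : ℝ, 0 < v → v ^ (1 / μ) < V₁ →
      -α₁ * v ^ γ₁ - α₂ * v ^ γ₂ + δ₁ * v ≤ 0 := by
    intro v hv hvw
    set w := v ^ (1 / μ) with hwdef
    have hw0 : 0 < w := Real.rpow_pos_of_pos hv _
    have hg1 : v ^ γ₁ = v * w := by
      rw [hγ₁, Real.rpow_add hv, Real.rpow_one]
    have hg2 : v ^ γ₂ = v / w := by
      rw [eq_div_iff (ne_of_gt hw0), hwdef, hγ₂, ← Real.rpow_add hv]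
      norm_num
    have hq := hquad w hw0 hvw
    rw [hg1, hg2]
    have key : -α₁ * (v * w) - α₂ * (v / w) + δ₁ * v
        = (v / w) * (-(α₁ * w ^ 2 - δ₁ * w + α₂)) := by
      field_simp; ring
    rw [key]
    have hvw0 : 0 < v / w := div_pos hv hw0
    nlinarith
  set kv := k * V₁ with hkvdef
  have hkvpos : 0 < kv := mul_pos hk0 hV₁pos
  have hkvlt : kv < V₁ := by
    rw [hkvdef]; nlinarith
  set c := kv ^ μ with hcdef
  have hcpos : 0 < c := Real.rpow_pos_of_pos hkvpos μ
  have hcroot : c ^ (1 / μ) = kv := by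
    rw [hcdef, ← Real.rpow_mul hkvpos.le, mul_one_div, div_self hμne, Real.rpow_one]
  have hcltV1μ : c < V₁ ^ μ := by
    rw [hcdef]; exact Real.rpow_lt_rpow hkvpos.le hkvlt hμ0
  have hV1root : (V₁ ^ μ) ^ (1 / μ) = V₁ := by
    rw [← Real.rpow_mul hV₁pos.le, mul_one_div, div_self hμne, Real.rpow_one]
  have hV0c : V 0 ≤ c := by
    have h := Real.rpow_le_rpow (Real.rpow_nonneg (hpos 0 le_rfl) _) hV0 hμ0.le
    rwa [← Real.rpow_mul (hpos 0 le_rfl), one_div_mul_cancel hμne, Real.rpow_one,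
      ← hcdef] at h
  -- derivative vanishes at interior zeros
  have hder0 : ∀ t : ℝ, 0 < t → V t = 0 → deriv V t = 0 := by
    intro t ht hVt
    have hmin : IsLocalMin V t := by
      have hev : ∀ᶠ s in 𝓝 t, 0 < s := eventually_gt_nhds ht
      filter_upwards [hev] with s hs
      rw [hVt]; exact hpos s hs.le
    exact hmin.deriv_eq_zero
  -- forward invariance
  have hinv : ∀ t ≥ (0:ℝ), V t ≤ c := by
    by_contra h
    push_neg at h
    obtain ⟨t₁, ht₁0, ht₁⟩ := h
    set c' := min (V t₁) ((c + V₁ ^ μ) / 2) with hc'def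
    have hc'c : c < c' := lt_min ht₁ (by linarith)
    have hc'lt : c' < V₁ ^ μ := lt_of_le_of_lt (min_le_right _ _) (by linarith)
    have hc'le : c' ≤ V t₁ := min_le_left _ _
    have hconts : ContinuousOn V (Set.Icc 0 t₁) := fun x hx =>
      ((hdiff x hx.1).continuousAt).continuousWithinAt
    set S := Set.Icc 0 t₁ ∩ V ⁻¹' Set.Ici c' with hSdef
    have hSclosed : IsClosed S :=
      ContinuousOn.preimage_isClosed_of_isClosed hconts isClosed_Icc isClosed_Ici
    have hSne : S.Nonempty := ⟨t₁, ⟨ht₁0, le_rfl⟩, hc'le⟩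
    have hSbdd : BddBelow S := ⟨0, fun x hx => hx.1.1⟩
    set t₂ := sInf S with ht₂def
    have ht₂S : t₂ ∈ S := hSclosed.csInf_mem hSne hSbdd
    have ht₂c' : c' ≤ V t₂ := ht₂S.2
    have ht₂pos : 0 < t₂ := by
      rcases lt_or_eq_of_le ht₂S.1.1 with hlt | heq
      · exact hlt
      · exfalso; rw [← heq] at ht₂c'; linarith
    have hlt : ∀ x ∈ Set.Ioo (0:ℝ) t₂, V x < c' := by
      intro x hx
      by_contra hge
      push_neg at hge
      have hxS : x ∈ S := ⟨⟨hx.1.le, hx.2.le.trans ht₂S.1.2⟩, hge⟩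
      exact absurd (csInf_le hSbdd hxS) (not_le.2 hx.2)
    have hderiv : ∀ x ∈ Set.Ioo (0:ℝ) t₂, deriv V x ≤ 0 := by
      intro x hx
      rcases eq_or_lt_of_le (hpos x hx.1.le) with hz | hz
      · exact le_of_eq (hder0 x hx.1 hz.symm)
      · have hVx : V x < V₁ ^ μ := lt_trans (hlt x hx) hc'lt
        have hroot : (V x) ^ (1 / μ) < V₁ := by
          have h' := Real.rpow_lt_rpow (hpos x hx.1.le) hVx hinvμ
          rwa [hV1root] at h'
        exact le_trans (hineq x hx.1.le hz) (hrhs (V x) hz hroot)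
    have hanti : AntitoneOn V (Set.Icc 0 t₂) := by
      apply antitoneOn_of_deriv_nonpos (convex_Icc 0 t₂)
      · exact fun x hx => ((hdiff x hx.1).continuousAt).continuousWithinAt
      · rw [interior_Icc]
        exact fun x hx => (hdiff x hx.1.le).differentiableWithinAt
      · rw [interior_Icc]; exact hderiv
    have hmono := hanti (Set.mem_Icc.2 ⟨le_rfl, ht₂pos.le⟩)
      (Set.mem_Icc.2 ⟨ht₂pos.le, le_rfl⟩) ht₂pos.le
    linarith
  -- global nonincreasing
  have hderall : ∀ x ∈ Set.Ioi (0:ℝ), deriv V x ≤ 0 := by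
    intro x hx
    have hx0 : (0:ℝ) < x := hx
    rcases eq_or_lt_of_le (hpos x hx0.le) with hz | hz
    · exact le_of_eq (hder0 x hx0 hz.symm)
    · have hVx : V x < V₁ ^ μ := lt_of_le_of_lt (hinv x hx0.le) hcltV1μ
      have hroot : (V x) ^ (1 / μ) < V₁ := by
        have h' := Real.rpow_lt_rpow (hpos x hx0.le) hVx hinvμ
        rwa [hV1root] at h'
      exact le_trans (hineq x hx0.le hz) (hrhs (V x) hz hroot)
  have hanti : AntitoneOn V (Set.Ici 0) := by
    apply antitoneOn_of_deriv_nonpos (convex_Ici 0)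
    · exact fun x hx => ((hdiff x hx).continuousAt).continuousWithinAt
    · rw [interior_Ici]
      exact fun x hx => (hdiff x (le_of_lt hx)).differentiableWithinAt
    · rw [interior_Ici]; exact hderall
  refine ⟨fun s t hs hst => hanti (Set.mem_Ici.2 hs) (Set.mem_Ici.2 (hs.trans hst)) hst,
    fun t ht => ?_⟩
  calc (V t) ^ (1 / μ) ≤ c ^ (1 / μ) :=
        Real.rpow_le_rpow (hpos t ht) (hinv t ht) hinvμ.le
    _ = kv := hcroot
end
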